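/- arXiv:math/0005174 — 2 statements merged into one kernel-verified Lean document; each statement's English description precedes it below -/
import Mathlib

section
/- If s_1 + s_2 + Σ_{r=1}^m d_r = 0 for integers s_1, s_2, then W(s_1, d^m) = (-1)^{m+1} W(s_2, d^m), where W is the quasi-polynomial extension of the restricted partition number to all integers (i.e., the unique quasi-polynomial agreeing with the partition count on nonnegative integers). -/
/-!
Let `L = ∏ᵢ (1 - Bᵈⁱ)`, with `B` the backward shift on functions `ℤ → R`. Splitting off one
coordinate gives `N_{A ∪ {a}}(s) = N_A(s) + N_{A ∪ {a}}(s - dₐ)` for the counts `N_A` of solutions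
supported in `A`, hence `L W = δ₀` (with `W = 0` on negative arguments). Since `L f` is again a
quasi-polynomial of period `lcm d` and equals `L W` for large `s`, it vanishes identically.
Complementing subsets shows that `e(s) = (-1)^(m+1) W(-s - ∑ d)` satisfies `L e = -δ₀` as well, so
`L` kills `f - W - e`, which vanishes for `s ≥ 1`. The largest shift in `L` occurs in the single
term `±u(s - ∑ d)`, so such a function vanishes identically. Hence
`f(s) = W(s) + (-1)^(m+1) W(-s - ∑ d)`, which is symmetric under `s ↦ -s - ∑ d` up to the sign.
-/

/-- Restricted partition number: number of nonnegative integer solutions of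
`∑ i, d i * x i = s`. -/
noncomputable def W {m : ℕ} (d : Fin m → ℕ) (s : ℤ) : ℕ :=
  Nat.card {x : Fin m → ℕ // ∑ i, (d i : ℤ) * (x i : ℤ) = s}

open Finset Polynomial

section Solutions

variable {ι : Type*} [Fintype ι] (d : ι → ℕ)

def supportedSolutions (A : Finset ι) (s : ℤ) : Set (ι → ℕ) :=
  {x | (∀ i ∉ A, x i = 0) ∧ ∑ i, (d i : ℤ) * x i = s}

variable {d}

lemma le_of_mem_supportedSolutions (hd : ∀ i, 0 < d i) {A : Finset ι} {s : ℤ} {x : ι → ℕ}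
    (hx : x ∈ supportedSolutions d A s) (i : ι) : (x i : ℤ) ≤ s := by
  calc (x i : ℤ) ≤ d i * x i := le_mul_of_one_le_left (by positivity) (by exact_mod_cast hd i)
    _ ≤ ∑ j, (d j : ℤ) * x j :=
        single_le_sum (f := fun j ↦ (d j : ℤ) * x j) (fun j _ ↦ by positivity) (mem_univ i)
    _ = s := hx.2

lemma supportedSolutions_finite (hd : ∀ i, 0 < d i) (A : Finset ι) (s : ℤ) :
    (supportedSolutions d A s).Finite :=
  (Set.Finite.pi fun _ ↦ Set.finite_Iic s.toNat).subset fun x hx i _ ↦ by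
    have := le_of_mem_supportedSolutions hd hx i
    simp only [Set.mem_Iic]
    omega

lemma ncard_supportedSolutions_empty (s : ℤ) :
    (supportedSolutions d ∅ s).ncard = if s = 0 then 1 else 0 := by
  have hzero : ∀ x ∈ supportedSolutions d ∅ s, x = 0 := fun x hx ↦ funext fun i ↦ hx.1 i (by simp)
  split_ifs with hs
  · rw [Set.ncard_eq_one]
    exact ⟨0, Set.eq_singleton_iff_unique_mem.2 ⟨⟨fun _ _ ↦ rfl, by simp [hs]⟩, hzero⟩⟩
  · convert Set.ncard_empty (ι → ℕ)
    refine Set.eq_empty_of_forall_notMem fun x hx ↦ hs ?_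
    rw [← hx.2, hzero x hx]
    simp

lemma sum_mul_add_single [DecidableEq ι] (x : ι → ℕ) (a : ι) :
    ∑ i, (d i : ℤ) * ((x + Pi.single a 1 : ι → ℕ) i) = ∑ i, (d i : ℤ) * x i + d a := by
  simp [mul_add, sum_add_distrib, Pi.single_apply]

lemma supportedSolutions_insert [DecidableEq ι] {a : ι} {A : Finset ι} (ha : a ∉ A) (s : ℤ) :
    supportedSolutions d (insert a A) s = supportedSolutions d A s ∪
      (· + Pi.single a 1) '' supportedSolutions d (insert a A) (s - d a) := by
  ext x
  constructor
  · rintro ⟨hsupp, hsum⟩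
    by_cases hxa : x a = 0
    · refine Or.inl ⟨fun i hi ↦ ?_, hsum⟩
      by_cases hia : i = a
      · rwa [hia]
      · exact hsupp i (by simp [hia, hi])
    · have hx : x - Pi.single a 1 + Pi.single a 1 = x := by
        ext i
        by_cases hia : i = a
        · subst hia
          simp only [Pi.add_apply, Pi.sub_apply, Pi.single_eq_same]
          omega
        · simp [hia]
      refine Or.inr ⟨x - Pi.single a 1, ⟨fun i hi ↦ by simp [hsupp i hi], ?_⟩, hx⟩
      have := sum_mul_add_single (d := d) (x - Pi.single a 1) a
      rw [hx, hsum] at this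
      linarith
  · rintro (⟨hsupp, hsum⟩ | ⟨y, ⟨hsupp, hsum⟩, rfl⟩)
    · exact ⟨fun i hi ↦ hsupp i (by simp_all), hsum⟩
    · refine ⟨fun i hi ↦ ?_, by rw [sum_mul_add_single, hsum]; ring⟩
      have hia : i ≠ a := by rintro rfl; simp at hi
      simp [hsupp i hi, hia]

lemma ncard_supportedSolutions_insert [DecidableEq ι] (hd : ∀ i, 0 < d i) {a : ι}
    {A : Finset ι} (ha : a ∉ A) (s : ℤ) :
    (supportedSolutions d (insert a A) s).ncard =
      (supportedSolutions d A s).ncard + (supportedSolutions d (insert a A) (s - d a)).ncard := by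
  have hdisj : Disjoint (supportedSolutions d A s)
      ((· + Pi.single a 1) '' supportedSolutions d (insert a A) (s - d a)) := by
    refine Set.disjoint_left.2 fun x hx ⟨y, _, hy⟩ ↦ ?_
    have := hx.1 a ha
    rw [← hy] at this
    simp at this
  rw [supportedSolutions_insert ha, Set.ncard_union_eq hdisj (supportedSolutions_finite hd _ _)
    ((supportedSolutions_finite hd _ _).image _),
    Set.ncard_image_of_injective _ (add_left_injective _)]

lemma sum_powerset_neg_one_pow_mul_ncard {R : Type*} [CommRing R] [DecidableEq ι]
    (hd : ∀ i, 0 < d i) (A : Finset ι) (s : ℤ) :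
    ∑ S ∈ A.powerset, (-1 : R) ^ #S * ((supportedSolutions d A (s - ∑ i ∈ S, (d i : ℤ))).ncard : R)
      = if s = 0 then 1 else 0 := by
  induction A using Finset.induction_on generalizing s with
  | empty => simp [ncard_supportedSolutions_empty]
  | @insert a A ha ih =>
    rw [sum_powerset_insert ha, ← ih s, ← sum_add_distrib]
    refine sum_congr rfl fun S hS ↦ ?_
    have haS : a ∉ S := fun h ↦ ha (mem_powerset.1 hS h)
    rw [card_insert_of_notMem haS, sum_insert haS,
      ncard_supportedSolutions_insert hd ha (s - ∑ i ∈ S, (d i : ℤ)),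
      show s - (d a + ∑ i ∈ S, (d i : ℤ)) = s - ∑ i ∈ S, (d i : ℤ) - d a by ring]
    push_cast
    ring

lemma sum_lt_sum_univ (hd : ∀ i, 0 < d i) {S : Finset ι} (hS : S ≠ univ) :
    ∑ i ∈ S, (d i : ℤ) < ∑ i, (d i : ℤ) := by
  obtain ⟨i, hi⟩ : ∃ i, i ∉ S := by simpa [eq_univ_iff_forall] using hS
  exact sum_lt_sum_of_subset (subset_univ S) (mem_univ i) hi (by exact_mod_cast hd i)
    fun j _ _ ↦ by positivity

end Solutions

section ShiftDiff

variable {ι R : Type*} [Fintype ι] [CommRing R]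

/-- The operator `∏ᵢ (1 - Bᵈⁱ)`, `B` the backward shift, expanded over subsets. -/
def shiftDiff (d : ι → ℕ) : (ℤ → R) →ₗ[R] (ℤ → R) where
  toFun u s := ∑ S : Finset ι, (-1) ^ #S * u (s - ∑ i ∈ S, (d i : ℤ))
  map_add' u v := by ext; simp [mul_add, sum_add_distrib]
  map_smul' a u := by ext; simp [mul_left_comm, mul_sum]

lemma shiftDiff_apply (d : ι → ℕ) (u : ℤ → R) (s : ℤ) :
    shiftDiff d u s = ∑ S : Finset ι, (-1) ^ #S * u (s - ∑ i ∈ S, (d i : ℤ)) := rfl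

lemma shiftDiff_reflect (d : ι → ℕ) (u : ℤ → R) (s : ℤ) :
    shiftDiff d (fun t ↦ (-1) ^ (Fintype.card ι + 1) * u (-t - ∑ i, (d i : ℤ))) s =
      -shiftDiff d u (-s) := by
  classical
  rw [shiftDiff_apply, shiftDiff_apply, ← sum_neg_distrib]
  refine Fintype.sum_bijective compl compl_involutive.bijective _ _ fun S ↦ ?_
  rw [← sum_add_sum_compl S, ← card_add_card_compl S,
    show -(s - ∑ i ∈ S, (d i : ℤ)) - (∑ i ∈ S, (d i : ℤ) + ∑ i ∈ Sᶜ, (d i : ℤ)) =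
      -s - ∑ i ∈ Sᶜ, (d i : ℤ) by ring,
    pow_succ, pow_add]
  have hsq : ((-1 : R) ^ #S) * (-1) ^ #S = 1 := by rw [← pow_add, Even.neg_one_pow ⟨_, rfl⟩]
  linear_combination (-(-1) ^ #Sᶜ * u (-s - ∑ i ∈ Sᶜ, (d i : ℤ))) * hsq

lemma eq_zero_of_shiftDiff_eq_zero {d : ι → ℕ} (hd : ∀ i, 0 < d i) {v : ℤ → R}
    (hv : shiftDiff d v = 0) {b : ℤ} (hb : ∀ s, b ≤ s → v s = 0) : v = 0 := by
  have hdown : ∀ n : ℕ, ∀ s, b - n ≤ s → v s = 0 := by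
    intro n
    induction n with
    | zero => simpa using hb
    | succ n ih =>
      intro s hs
      rcases (show b - n ≤ s ∨ s = b - n - 1 by omega) with h | rfl
      · exact ih s h
      have := congrFun hv (b - n - 1 + ∑ i, (d i : ℤ))
      rw [shiftDiff_apply, Fintype.sum_eq_single univ fun S hS ↦ by
        rw [ih _ (by linarith [sum_lt_sum_univ hd hS]), mul_zero]] at this
      simpa using this
  funext s
  exact hdown (b - s).toNat s (by omega)

end ShiftDiff

section Progressions

variable {R : Type*} [CommRing R]

def IsPolynomialOnProgressions (T : ℤ) (u : ℤ → R) : Prop :=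
  ∀ s, ∃ p : R[X], ∀ t : ℤ, u (s + t * T) = p.eval (t : R)

lemma isPolynomialOnProgressions_of_periodic {n : ℕ} {T : ℤ} {c : Fin n → ℤ → R}
    (hc : ∀ j, Function.Periodic (c j) T) {f : ℤ → R}
    (hf : ∀ s, f s = ∑ j, c j s * (s : R) ^ (j : ℕ)) : IsPolynomialOnProgressions T f := by
  intro s
  refine ⟨∑ j, C (c j s) * (C (s : R) + C (T : R) * X) ^ (j : ℕ), fun t ↦ ?_⟩
  have hcT : ∀ j, c j (s + t * T) = c j s := fun j ↦ by simpa using (hc j).int_mul t s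
  simp [hf, eval_finsetSum, hcT, mul_comm (t : R)]

lemma IsPolynomialOnProgressions.shiftDiff {ι : Type*} [Fintype ι] {T : ℤ} {u : ℤ → R}
    (hu : IsPolynomialOnProgressions T u) (d : ι → ℕ) :
    IsPolynomialOnProgressions T (shiftDiff d u) := by
  intro s
  choose p hp using hu
  refine ⟨∑ S : Finset ι, C ((-1) ^ #S) * p (s - ∑ i ∈ S, (d i : ℤ)), fun t ↦ ?_⟩
  simp only [shiftDiff_apply, eval_finsetSum, eval_mul, eval_C, ← hp]
  congr! 3
  ring

lemma IsPolynomialOnProgressions.eq_zero [IsDomain R] [CharZero R] {T : ℤ} (hT : 0 < T)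
    {u : ℤ → R} (hu : IsPolynomialOnProgressions T u) {b : ℤ} (hb : ∀ s, b ≤ s → u s = 0) :
    u = 0 := by
  funext s
  obtain ⟨p, hp⟩ := hu s
  have hp0 : p = 0 := by
    refine eq_zero_of_infinite_isRoot p (Set.infinite_of_injective_forall_mem
      (f := fun n : ℕ ↦ ((n + (b - s).toNat : ℕ) : R))
      (Nat.cast_injective.comp (add_left_injective _)) fun n ↦ ?_)
    have hle : b ≤ s + (n + (b - s).toNat : ℕ) * T := by
      have := le_mul_of_one_le_right (by positivity : (0 : ℤ) ≤ (n + (b - s).toNat : ℕ)) hT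
      omega
    have := hp (n + (b - s).toNat : ℕ)
    rw [hb _ hle] at this
    exact_mod_cast this.symm
  simpa [hp0] using hp 0

end Progressions

section RestrictedPartition

variable {m : ℕ}

lemma W_eq_ncard (d : Fin m → ℕ) (s : ℤ) : W d s = (supportedSolutions d univ s).ncard := by
  simp [supportedSolutions]
  rfl

lemma W_eq_zero_of_neg (d : Fin m → ℕ) {s : ℤ} (hs : s < 0) : W d s = 0 :=
  have : IsEmpty {x : Fin m → ℕ // ∑ i, (d i : ℤ) * x i = s} :=
    ⟨fun x ↦ hs.not_ge (x.2 ▸ sum_nonneg fun i _ ↦ by positivity)⟩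
  Nat.card_of_isEmpty

lemma shiftDiff_W {R : Type*} [CommRing R] {d : Fin m → ℕ} (hd : ∀ i, 0 < d i) (s : ℤ) :
    shiftDiff d (fun t ↦ (W d t : R)) s = if s = 0 then 1 else 0 := by
  simp only [shiftDiff_apply, W_eq_ncard]
  rw [← powerset_univ]
  exact sum_powerset_neg_one_pow_mul_ncard hd univ s

variable {R : Type*} [CommRing R] {d : Fin m → ℕ} {f : ℤ → R}

lemma shiftDiff_eq_zero_of_eq_W [IsDomain R] [CharZero R] (hd : ∀ i, 0 < d i) {T : ℤ}
    (hT : 0 < T) (hf : IsPolynomialOnProgressions T f) (hagree : ∀ s, 0 ≤ s → f s = W d s) :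
    shiftDiff d f = 0 := by
  refine (hf.shiftDiff d).eq_zero hT (b := ∑ i, (d i : ℤ) + 1) fun s hs ↦ ?_
  calc shiftDiff d f s = shiftDiff d (fun t ↦ (W d t : R)) s := by
        rw [shiftDiff_apply, shiftDiff_apply]
        refine Fintype.sum_congr _ _ fun S ↦ ?_
        have hS : ∑ i ∈ S, (d i : ℤ) ≤ ∑ i, (d i : ℤ) :=
          sum_le_univ_sum_of_nonneg fun i ↦ by positivity
        rw [hagree _ (by omega)]
    _ = 0 := by
        have hD : 0 ≤ ∑ i, (d i : ℤ) := sum_nonneg fun i _ ↦ by positivity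
        rw [shiftDiff_W hd, if_neg (by omega)]

lemma eq_W_add_W_reflect (hd : ∀ i, 0 < d i) (hf : shiftDiff d f = 0)
    (hagree : ∀ s, 0 ≤ s → f s = W d s) (s : ℤ) :
    f s = W d s + (-1) ^ (m + 1) * W d (-s - ∑ i, (d i : ℤ)) := by
  set w : ℤ → R := fun t ↦ W d t
  have hw : ∀ t, shiftDiff d w t = if t = 0 then 1 else 0 := shiftDiff_W hd
  suffices f - (w + fun t ↦ (-1) ^ (m + 1) * w (-t - ∑ i, (d i : ℤ))) = 0 from
    sub_eq_zero.1 (congrFun this s)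
  refine eq_zero_of_shiftDiff_eq_zero hd ?_ (b := 1) fun t ht ↦ ?_
  · ext t
    have hrefl := shiftDiff_reflect d w t
    rw [Fintype.card_fin] at hrefl
    simp only [map_sub, map_add, Pi.sub_apply, Pi.add_apply, hf, hrefl, hw, Pi.zero_apply,
      neg_eq_zero]
    split_ifs <;> simp
  · have hD : 0 ≤ ∑ i, (d i : ℤ) := sum_nonneg fun i _ ↦ by positivity
    simp [hagree t (by omega), w, W_eq_zero_of_neg d (show -t - ∑ i, (d i : ℤ) < 0 by omega)]

end RestrictedPartition

theorem stmt7_general {m : ℕ} (d : Fin m → ℕ) (hd : ∀ i, 0 < d i)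
    (f : ℤ → ℚ)
    (hagree : ∀ s : ℤ, 0 ≤ s → f s = W d s)
    (c : Fin m → ℤ → ℚ)
    (hper : ∀ j s, c j (s + (((Finset.univ : Finset (Fin m)).lcm d : ℕ) : ℤ)) = c j s)
    (hpoly : ∀ s, f s = ∑ j, c j s * (s : ℚ) ^ (j : ℕ))
    (s₁ s₂ : ℤ) (h : s₁ + s₂ + ∑ i, (d i : ℤ) = 0) :
    f s₁ = (-1) ^ (m + 1) * f s₂ := by
  have hT : 0 < (((univ : Finset (Fin m)).lcm d : ℕ) : ℤ) := by
    have : (univ : Finset (Fin m)).lcm d ≠ 0 := by simp [Finset.lcm_eq_zero_iff, (hd _).ne']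
    omega
  have hformula := eq_W_add_W_reflect hd
    (shiftDiff_eq_zero_of_eq_W hd hT (isPolynomialOnProgressions_of_periodic hper hpoly) hagree)
    hagree
  rw [hformula s₁, hformula s₂, show -s₁ - ∑ i, (d i : ℤ) = s₂ by omega,
    show -s₂ - ∑ i, (d i : ℤ) = s₁ by omega, mul_add, ← mul_assoc, ← pow_add,
    Even.neg_one_pow ⟨_, rfl⟩]
  ring

/-- Reciprocity for the quasi-polynomial extension of the restricted partition number:
if `f : ℤ → ℚ` is a quasi-polynomial with period `lcm d` agreeing with `W d` on the
nonnegative integers, then `s₁ + s₂ + ∑ d = 0` implies `f s₁ = (-1)^(m+1) f s₂`. -/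
theorem stmt7 {m : ℕ} (hm : 1 ≤ m) (d : Fin m → ℕ) (hd : ∀ i, 0 < d i)
    (f : ℤ → ℚ)
    (hagree : ∀ s : ℤ, 0 ≤ s → f s = W d s)
    (c : Fin m → ℤ → ℚ)
    (hper : ∀ j s, c j (s + (((Finset.univ : Finset (Fin m)).lcm d : ℕ) : ℤ)) = c j s)
    (hpoly : ∀ s, f s = ∑ j, c j s * (s : ℚ) ^ (j : ℕ))
    (s₁ s₂ : ℤ) (h : s₁ + s₂ + ∑ i, (d i : ℤ) = 0) :
    f s₁ = (-1) ^ (m + 1) * f s₂ :=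
  stmt7_general d hd f hagree c hper hpoly s₁ s₂ h
end

section
/- The restricted partition function W(s, d^m) is a quasi-polynomial in s of degree m - 1 with period τ = lcm(d_1,...,d_m): there exist functions Q_1,...,Q_m : ℤ → ℚ, where Q_j is periodic with period lcm(d_1,...,d_j), such that W(s, d^m) = Q_m(s) + Σ_{j=1}^{m-1} Q_j(s) · s^{m-j} for all sufficiently large (in fact all nonnegative) integers s. -/
/-!
Write `d = (d₀, d')`. Conditioning on `x₀` gives `W(s, d) = ∑_{0 ≤ k ≤ s / d₀} W(s - k d₀, d')`,
so `W(·, d)` is a telescoping sum once `W(·, d')` has an antidifference `P` for the backward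
difference `∇P(s) = P(s) - P(s - d₀)`. A quasi-polynomial term `c(s) sⁿ` with `L`-periodic `c` has
one: split `c = M + ∇H`, where `M` is the mean of `c` over `d₀`-orbits (so `M` is `d₀`-periodic)
and `H` is `lcm(d₀, L)`-periodic; then `M(s) sⁿ⁺¹ / (d₀ (n + 1)) + H(s) sⁿ` is an antidifference
up to terms of degree `< n` with `lcm(d₀, L)`-periodic coefficients, and one recurses on the
degree. So the coefficient of `s^(m-1-j)` acquires period `lcm(d₀, …, d_j)`, while the boundary
term `P(s mod d₀ - d₀)` of the telescoping sum is `d₀`-periodic.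
-/

open Finset Function

lemma Function.Periodic.of_natCast_dvd {α : Type*} {f : ℤ → α} {a b : ℕ} (hf : Periodic f a)
    (h : a ∣ b) : Periodic f b := by
  obtain ⟨k, rfl⟩ := h
  simpa [mul_comm] using hf.nat_mul k

lemma pow_sub_sub_pow_eq_sum {R : Type*} [CommRing R] (x y : R) (n : ℕ) :
    x ^ n - (x - y) ^ n = ∑ i ∈ range n, -((-1) ^ (i + n) * y ^ (n - i) * n.choose i) * x ^ i := by
  rw [sub_pow, sum_range_succ, ← two_mul, (even_two_mul n).neg_one_pow]
  simp only [Nat.sub_self, pow_zero, Nat.choose_self, Nat.cast_one, mul_one, one_mul]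
  rw [sub_add_eq_sub_sub_swap, sub_self, zero_sub, ← sum_neg_distrib]
  exact sum_congr rfl fun i _ => by ring

lemma pow_succ_sub_sub_pow_succ_sub_eq_sum {R : Type*} [CommRing R] (x y : R) (n : ℕ) :
    x ^ (n + 1) - (x - y) ^ (n + 1) - (n + 1) * y * x ^ n =
      ∑ i ∈ range n, -((-1) ^ (i + (n + 1)) * y ^ (n + 1 - i) * (n + 1).choose i) * x ^ i := by
  rw [pow_sub_sub_pow_eq_sum, sum_range_succ, Nat.choose_succ_self_right, Nat.add_sub_cancel_left,
    show n + (n + 1) = 2 * n + 1 by ring, pow_succ, (even_two_mul n).neg_one_pow]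
  push_cast
  ring

def quasiPoly (L n : ℕ) : Submodule ℚ (ℤ → ℚ) where
  carrier := {f | ∃ c : ℕ → ℤ → ℚ, (∀ i, Periodic (c i) L) ∧
    f = fun s => ∑ i ∈ range n, c i s * (s : ℚ) ^ i}
  zero_mem' := ⟨0, fun _ _ => rfl, by simp; rfl⟩
  add_mem' := by
    rintro f g ⟨c, hc, rfl⟩ ⟨c', hc', rfl⟩
    exact ⟨c + c', fun i => (hc i).add (hc' i), by ext; simp [add_mul, sum_add_distrib]⟩
  smul_mem' := by
    rintro a f ⟨c, hc, rfl⟩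
    exact ⟨fun i => a • c i, fun i => (hc i).smul a, by ext; simp [mul_sum, mul_assoc]⟩

namespace quasiPoly

variable {L n : ℕ} {f c : ℤ → ℚ}

lemma exists_coeff_of_le {N : ℕ} (hf : f ∈ quasiPoly L n) (hN : n ≤ N) :
    ∃ c : ℕ → ℤ → ℚ, (∀ i, Periodic (c i) L) ∧ (∀ i, n ≤ i → c i = 0) ∧
      f = fun s => ∑ i ∈ range N, c i s * (s : ℚ) ^ i := by
  obtain ⟨c, hc, rfl⟩ := hf
  refine ⟨fun i => if i < n then c i else 0, fun i => ?_, fun i hi => by simp [hi.not_gt], ?_⟩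
  · dsimp only
    split_ifs
    exacts [hc i, fun _ => rfl]
  · ext s
    rw [eventually_constant_sum (fun i hi => by simp [not_lt.2 hi]) hN]
    exact sum_congr rfl fun i hi => by simp [mem_range.1 hi]

lemma mono {L' n' : ℕ} (hL : L ∣ L') (hn : n ≤ n') : quasiPoly L n ≤ quasiPoly L' n' := by
  intro f hf
  obtain ⟨c, hc, -, hf⟩ := exists_coeff_of_le hf hn
  exact ⟨c, fun i => (hc i).of_natCast_dvd hL, hf⟩

lemma zero_right : quasiPoly L 0 = ⊥ :=
  eq_bot_iff.2 fun f ⟨_, _, hf⟩ => by rw [Submodule.mem_bot, hf]; rfl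

lemma monomial_mem {i : ℕ} (hc : Periodic c L) (hi : i < n) :
    (fun s => c s * (s : ℚ) ^ i) ∈ quasiPoly L n :=
  ⟨fun k => if k = i then c else 0, fun k => by dsimp only; split_ifs; exacts [hc, fun _ => rfl],
    by ext; simp [ite_apply, hi]⟩

lemma periodic_mem (hc : Periodic c L) (hn : 0 < n) : c ∈ quasiPoly L n := by
  simpa using monomial_mem hc hn

lemma mul_mem (hc : Periodic c L) (hf : f ∈ quasiPoly L n) : c * f ∈ quasiPoly L n := by
  obtain ⟨a, ha, rfl⟩ := hf
  exact ⟨fun i => c * a i, fun i => hc.mul (ha i), by ext; simp [mul_sum, mul_assoc]⟩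

lemma polynomial_mem (b : ℕ → ℚ) :
    (fun s : ℤ => ∑ i ∈ range n, b i * (s : ℚ) ^ i) ∈ quasiPoly L n :=
  ⟨fun i _ => b i, fun _ _ => rfl, rfl⟩

lemma mem_succ (hf : f ∈ quasiPoly L (n + 1)) :
    ∃ g ∈ quasiPoly L n, ∃ a : ℤ → ℚ, Periodic a L ∧ f = g + fun s : ℤ => a s * (s : ℚ) ^ n := by
  obtain ⟨a, ha, rfl⟩ := hf
  exact ⟨_, ⟨a, ha, rfl⟩, a n, ha n, by ext; simp [sum_range_succ]⟩

lemma pow_sub_sub_pow_mem (y : ℚ) : (fun s : ℤ => (s : ℚ) ^ n - (s - y) ^ n) ∈ quasiPoly L n := by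
  simpa only [pow_sub_sub_pow_eq_sum] using polynomial_mem _

lemma pow_succ_sub_sub_pow_succ_sub_mem (y : ℚ) :
    (fun s : ℤ => (s : ℚ) ^ (n + 1) - (s - y) ^ (n + 1) - (n + 1) * y * s ^ n) ∈ quasiPoly L n := by
  simpa only [pow_succ_sub_sub_pow_succ_sub_eq_sum] using polynomial_mem _

end quasiPoly

def backwardDiff (q : ℤ) : (ℤ → ℚ) →ₗ[ℚ] ℤ → ℚ :=
  LinearMap.id - LinearMap.funLeft ℚ ℚ (· - q)

lemma backwardDiff_apply (q : ℤ) (P : ℤ → ℚ) (s : ℤ) : backwardDiff q P s = P s - P (s - q) :=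
  rfl

lemma sum_range_backwardDiff (P : ℤ → ℚ) (q s : ℤ) (K : ℕ) :
    ∑ k ∈ range K, backwardDiff q P (s - q * k) = P s - P (s - q * K) := by
  have := sum_range_sub' (fun k : ℕ => P (s - q * k)) K
  simp only [Nat.cast_zero, mul_zero, sub_zero, Nat.cast_succ] at this
  rw [← this]
  exact sum_congr rfl fun k _ => by rw [backwardDiff_apply, mul_add_one, sub_sub]

lemma Function.Periodic.exists_eq_add_backwardDiff {q L : ℕ} (hq : 0 < q) (hL : 0 < L)
    {c : ℤ → ℚ} (hc : Periodic c L) :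
    ∃ M H : ℤ → ℚ, Periodic M q ∧ Periodic H (q.lcm L) ∧ c = M + backwardDiff q H := by
  obtain ⟨N, hN⟩ := Nat.dvd_lcm_left q L
  have hN0 : (N : ℚ) ≠ 0 := by
    have := Nat.lcm_pos hq hL
    rw [hN] at this
    exact_mod_cast (Nat.pos_of_mul_pos_left this).ne'
  have hcN : ∀ s : ℤ, c (s + q * N) = c s := by
    simpa [hN] using hc.of_natCast_dvd (Nat.dvd_lcm_right q L)
  -- A weighted sum of `c` over the orbit `s + q * k`, `k ≤ N`, evaluated in two ways.
  have orbit (w : ℕ → ℚ) (s : ℤ) : ∑ k ∈ range N, w k * c (s + q * k) + w N * c s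
      = w 0 * c s + ∑ k ∈ range N, w (k + 1) * c (s + q + q * k) := by
    have := (sum_range_succ (fun k => w k * c (s + q * k)) N).symm.trans (sum_range_succ' _ N)
    simpa [hcN, mul_add, add_assoc, add_comm] using this
  set M : ℤ → ℚ := fun s => ∑ k ∈ range N, (N : ℚ)⁻¹ * c (s + q * k)
  set H : ℤ → ℚ := fun s => ∑ k ∈ range N, (k / N : ℚ) * c (s + q * k)
  have hM : Periodic M q := fun s => by linarith [orbit (fun _ => (N : ℚ)⁻¹) s]
  have hH (s : ℤ) : H (s + q) - H s = c s - M s := by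
    have := orbit (fun k => (k / N : ℚ)) s
    simp only [Nat.cast_add, Nat.cast_one, add_div, add_mul, sum_add_distrib, div_self hN0,
      one_mul, Nat.cast_zero, zero_div, zero_mul, zero_add] at this
    rw [← hM s]
    simp only [H, M, div_eq_mul_inv, one_mul] at this ⊢
    linarith
  refine ⟨M, fun s => H (s + q), hM, fun s => ?_, funext fun s => ?_⟩
  · simp only [H, hN]
    refine sum_congr rfl fun k _ => ?_
    push_cast
    rw [show s + q * N + q + q * k = s + q + q * k + q * N by ring, hcN]
  · simp [backwardDiff_apply, hH]

theorem quasiPoly_le_map_backwardDiff {q : ℕ} (hq : 0 < q) (n : ℕ) :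
    ∀ {L : ℕ}, 0 < L →
      quasiPoly L n ≤ (quasiPoly q (n + 1) ⊔ quasiPoly (q.lcm L) n).map (backwardDiff q) := by
  induction n with
  | zero => simp [quasiPoly.zero_right]
  | succ n ih =>
    intro L hL f hf
    obtain ⟨g, hg, a, ha, rfl⟩ := quasiPoly.mem_succ hf
    obtain ⟨M, H, hM, hH, rfl⟩ := ha.exists_eq_add_backwardDiff hq hL
    have hL' : 0 < q.lcm L := Nat.lcm_pos hq hL
    have hq' : (q : ℚ) * (n + 1) ≠ 0 := by positivity
    have hM' : Periodic (fun s => M s / (q * (n + 1))) q := fun s => by simp only [hM s]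
    -- `∇T = (M + ∇H) sⁿ` up to terms of degree `< n`.
    set T : ℤ → ℚ := fun s => M s / (q * (n + 1)) * (s : ℚ) ^ (n + 1) + H s * (s : ℚ) ^ n
    have hT : T ∈ quasiPoly q (n + 1 + 1) ⊔ quasiPoly (q.lcm L) (n + 1) :=
      Submodule.add_mem_sup (quasiPoly.monomial_mem hM' (by omega))
        (quasiPoly.monomial_mem hH (by omega))
    set f := g + fun s : ℤ => (M + backwardDiff q H) s * (s : ℚ) ^ n
    have hR : f - backwardDiff q T ∈ quasiPoly (q.lcm L) n := by
      have : f - backwardDiff q T = g - ((fun s => M s / (q * (n + 1))) *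
            (fun s : ℤ => (s : ℚ) ^ (n + 1) - (s - q) ^ (n + 1) - (n + 1) * q * s ^ n) +
          (fun s => H (s - q)) * fun s : ℤ => (s : ℚ) ^ n - (s - q) ^ n) := by
        ext s
        simp only [f, T, backwardDiff_apply, Pi.add_apply, Pi.sub_apply, Pi.mul_apply, hM.sub_eq]
        push_cast
        field_simp
        ring
      rw [this]
      refine sub_mem (quasiPoly.mono (Nat.dvd_lcm_right q L) le_rfl hg) (add_mem ?_ ?_)
      · exact quasiPoly.mul_mem (hM'.of_natCast_dvd (Nat.dvd_lcm_left q L))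
          (quasiPoly.pow_succ_sub_sub_pow_succ_sub_mem _)
      · exact quasiPoly.mul_mem (hH.sub_const _) (quasiPoly.pow_sub_sub_pow_mem _)
    have hP := ih hL' hR
    rw [← Nat.lcm_assoc, Nat.lcm_self] at hP
    rw [← add_sub_cancel (backwardDiff q T) f]
    exact add_mem (Submodule.mem_map_of_mem hT) (Submodule.map_mono (sup_le_sup
      (quasiPoly.mono dvd_rfl (by omega)) (quasiPoly.mono dvd_rfl (by omega))) hP)

theorem iSup_quasiPoly_le_map_backwardDiff {m q : ℕ} (hq : 0 < q) {L' : Fin m → ℕ}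
    (hL' : ∀ j, 0 < L' j) {L : Fin (m + 1) → ℕ} (h0 : q ∣ L 0)
    (hsucc : ∀ j, q.lcm (L' j) ∣ L j.succ) :
    ⨆ j, quasiPoly (L' j) (m - j) ≤ (⨆ j, quasiPoly (L j) (m + 1 - j)).map (backwardDiff q) :=
  iSup_le fun j => (quasiPoly_le_map_backwardDiff hq _ (hL' j)).trans <| Submodule.map_mono <|
    sup_le ((quasiPoly.mono h0 (by simp)).trans (le_iSup_of_le 0 le_rfl))
      ((quasiPoly.mono (hsucc j) (by simp)).trans (le_iSup_of_le j.succ le_rfl))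

theorem exists_periodic_coeff_of_mem_iSup_quasiPoly {m : ℕ} {L : Fin m → ℕ}
    (hL : ∀ i j, i ≤ j → L i ∣ L j) {F : ℤ → ℚ} (hF : F ∈ ⨆ j, quasiPoly (L j) (m - j)) :
    ∃ Q : Fin m → ℤ → ℚ, (∀ j, Periodic (Q j) (L j)) ∧
      ∀ s, F s = ∑ j, Q j s * (s : ℚ) ^ (m - 1 - j) := by
  refine Submodule.iSup_induction _ (motive := fun F => ∃ Q : Fin m → ℤ → ℚ,
    (∀ j, Periodic (Q j) (L j)) ∧ ∀ s, F s = ∑ j, Q j s * (s : ℚ) ^ (m - 1 - j)) hF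
    (fun j f hf => ?_) ⟨0, fun _ _ => rfl, by simp⟩ ?_
  · obtain ⟨c, hc, hc0, rfl⟩ := quasiPoly.exists_coeff_of_le hf (Nat.sub_le m j)
    refine ⟨fun k => c (m - 1 - k), fun k => ?_, fun s => ?_⟩
    · by_cases hjk : j ≤ k
      · exact (hc _).of_natCast_dvd (hL j k hjk)
      · simp only [hc0 (m - 1 - k) (by omega)]
        exact fun _ => rfl
    · exact (sum_range_reflect (fun i => c i s * (s : ℚ) ^ i) m).symm.trans
        (Fin.sum_univ_eq_sum_range (fun k => c (m - 1 - k) s * (s : ℚ) ^ (m - 1 - k)) m).symm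
  · rintro f g ⟨Q, hQ, hf⟩ ⟨Q', hQ', hg⟩
    exact ⟨Q + Q', fun j => (hQ j).add (hQ' j), fun s => by simp [hf, hg, add_mul, sum_add_distrib]⟩

lemma finite_solutions {m : ℕ} {d : Fin m → ℕ} (hd : ∀ i, 0 < d i) (s : ℤ) :
    Finite {x : Fin m → ℕ // ∑ i, (d i : ℤ) * x i = s} := by
  refine Set.Finite.to_subtype ((Set.Finite.pi (t := fun _ => Set.Iic s.toNat)
    fun _ => Set.finite_Iic _).subset fun x (hx : _ = s) i _ => ?_)
  have hle : (d i : ℤ) * x i ≤ s :=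
    hx ▸ single_le_sum (f := fun j => (d j : ℤ) * x j) (fun j _ => by positivity) (mem_univ i)
  have hd1 : (1 : ℤ) ≤ d i := by exact_mod_cast hd i
  show x i ≤ s.toNat
  nlinarith [Int.self_le_toNat s]

lemma W_fin_one {d : Fin 1 → ℕ} (hd : 0 < d 0) {s : ℤ} (hs : 0 ≤ s) :
    (W d s : ℚ) = if (d 0 : ℤ) ∣ s then 1 else 0 := by
  have hW : W d s = Nat.card {k : ℕ // (d 0 : ℤ) * k = s} :=
    Nat.card_congr (Equiv.subtypeEquiv (Equiv.funUnique (Fin 1) ℕ) (by simp))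
  rw [hW]
  split_ifs with hdvd
  · obtain ⟨t, rfl⟩ := hdvd
    have ht : 0 ≤ t := nonneg_of_mul_nonneg_right hs (by exact_mod_cast hd)
    refine Nat.cast_eq_one.2 (Nat.card_eq_one_iff_exists.2 ⟨⟨t.toNat, by simp [ht]⟩, ?_⟩)
    rintro ⟨k, hk⟩
    have := mul_left_cancel₀ (by exact_mod_cast hd.ne' : (d 0 : ℤ) ≠ 0) hk
    ext
    simp only
    omega
  · have : IsEmpty {k : ℕ // (d 0 : ℤ) * k = s} := ⟨fun ⟨k, hk⟩ => hdvd ⟨k, hk.symm⟩⟩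
    simp

lemma W_succ_eq_sum {m : ℕ} {d : Fin (m + 1) → ℕ} (hd : ∀ i, 0 < d i) (n : ℕ) :
    W d n = ∑ k ∈ range (n / d 0 + 1), W (Fin.tail d) (n - d 0 * k) := by
  have hbound (x : Fin (m + 1) → ℕ) (hx : ∑ i, (d i : ℤ) * x i = n) : x 0 < n / d 0 + 1 := by
    have : (d 0 : ℤ) * x 0 ≤ n :=
      hx ▸ single_le_sum (f := fun j => (d j : ℤ) * x j) (fun j _ => by positivity) (mem_univ 0)
    exact Nat.lt_succ_of_le ((Nat.le_div_iff_mul_le (hd 0)).2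
      (by rw [mul_comm]; exact_mod_cast this))
  let e : {x : Fin (m + 1) → ℕ // ∑ i, (d i : ℤ) * x i = n} ≃
      Σ k : Fin (n / d 0 + 1),
        {y : Fin m → ℕ // ∑ i, (Fin.tail d i : ℤ) * y i = n - d 0 * (k : ℕ)} :=
    { toFun := fun x => ⟨⟨x.1 0, hbound x.1 x.2⟩, Fin.tail x.1, by
        have := x.2
        rw [Fin.sum_univ_succ] at this
        simp only [Fin.tail]
        linarith⟩
      invFun := fun y => ⟨Fin.cons y.1 y.2.1, by
        rw [Fin.sum_univ_succ]
        have := y.2.2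
        simp only [Fin.tail] at this
        simp only [Fin.cons_zero, Fin.cons_succ]
        linarith⟩
      left_inv := fun x => Subtype.ext (Fin.cons_self_tail x.1)
      right_inv := fun y => by
        obtain ⟨k, y, hy⟩ := y
        rfl }
  have := fun k : Fin (n / d 0 + 1) => finite_solutions (d := Fin.tail d) (fun i => hd i.succ)
    (n - d 0 * (k : ℕ))
  rw [W, Nat.card_congr e, Nat.card_sigma]
  exact Fin.sum_univ_eq_sum_range (fun k => W (Fin.tail d) (n - d 0 * k)) _

theorem exists_mem_iSup_quasiPoly_eq_W (m : ℕ) {d : Fin (m + 1) → ℕ} (hd : ∀ i, 0 < d i) :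
    ∃ F ∈ ⨆ j : Fin (m + 1), quasiPoly ((Iic j).lcm d) (m + 1 - j),
      ∀ s, 0 ≤ s → (W d s : ℚ) = F s := by
  induction m with
  | zero =>
    have hper : Periodic (fun s : ℤ => if (d 0 : ℤ) ∣ s then (1 : ℚ) else 0) (d 0) :=
      fun s => by simp only [dvd_add_self_right]
    exact ⟨_, Submodule.mem_iSup_of_mem 0 (quasiPoly.periodic_mem
      (hper.of_natCast_dvd (dvd_lcm (mem_Iic.2 le_rfl))) one_pos), fun s hs => W_fin_one (hd 0) hs⟩
  | succ m ih =>
    obtain ⟨F, hF, hWF⟩ := ih (d := Fin.tail d) fun i => hd i.succ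
    have hlcm_pos (j : Fin (m + 1)) : 0 < (Iic j).lcm (Fin.tail d) :=
      Nat.pos_of_ne_zero fun h => by
        obtain ⟨i, -, hi⟩ := Finset.lcm_eq_zero_iff.1 h
        exact (hd i.succ).ne' hi
    have hlcm_succ (j : Fin (m + 1)) : (d 0).lcm ((Iic j).lcm (Fin.tail d)) ∣ (Iic j.succ).lcm d :=
      Nat.lcm_dvd (dvd_lcm (mem_Iic.2 (Fin.zero_le _))) (Finset.lcm_dvd fun i hi =>
        dvd_lcm (mem_Iic.2 (Fin.succ_le_succ_iff.2 (mem_Iic.1 hi))))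
    obtain ⟨P, hP, rfl⟩ := iSup_quasiPoly_le_map_backwardDiff (hd 0) hlcm_pos
      (L := fun j => (Iic j).lcm d) (dvd_lcm (mem_Iic.2 le_rfl)) hlcm_succ hF
    -- Telescoping gives `W d s = P s - P (s % d 0 - d 0)`, and the second term has period `d 0`.
    have hper : Periodic (fun s : ℤ => -P (s % d 0 - d 0)) (d 0) := fun s => by simp
    refine ⟨_, add_mem hP (Submodule.mem_iSup_of_mem 0 (quasiPoly.periodic_mem
      (hper.of_natCast_dvd (dvd_lcm (mem_Iic.2 le_rfl))) (by omega))), fun s hs => ?_⟩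
    lift s to ℕ using hs
    have hrem : (s : ℤ) - d 0 * ((s / d 0 + 1 : ℕ) : ℤ) = s % d 0 - d 0 := by
      have := Int.mul_ediv_add_emod (s : ℤ) (d 0)
      push_cast
      linarith
    rw [W_succ_eq_sum hd, Nat.cast_sum, Pi.add_apply, ← sub_eq_add_neg, ← hrem,
      ← sum_range_backwardDiff]
    refine sum_congr rfl fun k hk => hWF _ (sub_nonneg.2 ?_)
    have := (Nat.le_div_iff_mul_le (hd 0)).1 (Nat.lt_succ_iff.1 (mem_range.1 hk))
    rw [mul_comm]
    exact_mod_cast this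

theorem stmt16_general {m : ℕ} (hm : 1 ≤ m) (d : Fin m → ℕ) (hd : ∀ i, 0 < d i) :
    ∃ Q : Fin m → ℤ → ℚ,
      (∀ j : Fin m, ∀ s : ℤ, Q j (s + (((Finset.Iic j).lcm d : ℕ) : ℤ)) = Q j s) ∧
      (∀ s : ℤ, 0 ≤ s →
        (W d s : ℚ) = ∑ j : Fin m, Q j s * (s : ℚ) ^ (m - 1 - (j : ℕ))) := by
  obtain ⟨m, rfl⟩ : ∃ k, m = k + 1 := ⟨m - 1, by omega⟩
  obtain ⟨F, hF, hWF⟩ := exists_mem_iSup_quasiPoly_eq_W m hd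
  obtain ⟨Q, hQ, hFQ⟩ := exists_periodic_coeff_of_mem_iSup_quasiPoly
    (fun i j hij => lcm_mono (Iic_subset_Iic.2 hij)) hF
  exact ⟨Q, hQ, fun s hs => (hWF s hs).trans (hFQ s)⟩

theorem stmt16 {m : ℕ} (hm : 1 ≤ m) (d : Fin m → ℕ) (hd : ∀ i, 0 < d i)
    (hmono : Monotone d) :
    ∃ Q : Fin m → ℤ → ℚ,
      (∀ j : Fin m, ∀ s : ℤ, Q j (s + (((Finset.Iic j).lcm d : ℕ) : ℤ)) = Q j s) ∧
      (∀ s : ℤ, 0 ≤ s →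
        (W d s : ℚ) = ∑ j : Fin m, Q j s * (s : ℚ) ^ (m - 1 - (j : ℕ))) :=
  stmt16_general hm d hd
end
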